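/- Test-time error bound for mask substitution: under the assumptions below, $\mathrm{err}_{\mathrm{test}} := \mathbb{E}_q[v(f^*(p_q^\top V^*), i_q, p_q) - v(f(m_q^\top V), i_q, m_q)] \le L_v L_f (\epsilon_V + B_v(\epsilon_{\mathrm{sam}} + 2\sqrt{2\epsilon_{\mathrm{contrast}}})) + L_v \epsilon_{\mathrm{sam}} + \epsilon_f$. -/

import Mathlib

/-!
Telescope the test error through the predictions `v(f*(uᵀV*), p)`, `v(f*(uᵀV), p)`,
`v(f(uᵀV), p)` and `v(f(uᵀV), m)`. Apart from the step whose expectation is `ε_f`, each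
step is controlled by the Lipschitz bounds together with `‖xᵀW - yᵀW‖∞ ≤ ‖x - y‖₁ ‖W‖∞` and
`‖u - m‖₁ ≤ ‖u - p‖₁ + ‖m - p‖₁`; this costs `2 E‖u - p‖₁` and `ε_sam`. Pinsker's inequality
`‖u - p‖₁² ≤ 2 KL(p‖u)` and Jensen in the form `E X ≤ √(E X²)` then give
`E‖u - p‖₁ ≤ √(2 ε_contrast)`.
-/

open Real MeasureTheory

/-- Action of a vector on the rows of a matrix: `(matVec x V) j = ∑ k, x k * V k j`. -/
def matVec {P d : ℕ} (x : Fin P → ℝ) (V : Fin P → Fin d → ℝ) : Fin d → ℝ :=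
  fun j => ∑ k, x k * V k j

open InformationTheory Set

section matVec

variable {P d : ℕ}

lemma matVec_eq_sum_smul (x : Fin P → ℝ) (W : Fin P → Fin d → ℝ) :
    matVec x W = ∑ k, x k • W k := by
  ext j
  simp [matVec, Finset.sum_apply]

lemma matVec_sub_left (x y : Fin P → ℝ) (W : Fin P → Fin d → ℝ) :
    matVec x W - matVec y W = matVec (x - y) W := by
  ext j
  simp [matVec, sub_mul]

lemma matVec_sub_right (x : Fin P → ℝ) (V W : Fin P → Fin d → ℝ) :
    matVec x V - matVec x W = matVec x (V - W) := by
  ext j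
  simp [matVec, mul_sub]

lemma norm_matVec_le (x : Fin P → ℝ) (W : Fin P → Fin d → ℝ) :
    ‖matVec x W‖ ≤ (∑ k, |x k|) * ‖W‖ := by
  rw [matVec_eq_sum_smul, Finset.sum_mul]
  refine (norm_sum_le _ _).trans (Finset.sum_le_sum fun k _ => ?_)
  rw [norm_smul, Real.norm_eq_abs]
  exact mul_le_mul_of_nonneg_left (norm_le_pi_norm W k) (abs_nonneg _)

lemma norm_matVec_sub_left_le {B : ℝ} (x y : Fin P → ℝ) {W : Fin P → Fin d → ℝ}
    (hW : ‖W‖ ≤ B) : ‖matVec x W - matVec y W‖ ≤ B * ∑ k, |x k - y k| := by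
  rw [matVec_sub_left, mul_comm]
  exact (norm_matVec_le _ _).trans
    (mul_le_mul_of_nonneg_left hW (Finset.sum_nonneg fun k _ => abs_nonneg _))

lemma norm_matVec_sub_right_le {x : Fin P → ℝ} (hx0 : ∀ k, 0 ≤ x k) (hx1 : ∑ k, x k = 1)
    (V W : Fin P → Fin d → ℝ) : ‖matVec x V - matVec x W‖ ≤ ‖V - W‖ := by
  have hx : ∑ k, |x k| = 1 := by simp_rw [abs_of_nonneg (hx0 _), hx1]
  simpa [matVec_sub_right, hx] using norm_matVec_le x (V - W)

lemma norm_le_of_forall_abs_le {W : Fin P → Fin d → ℝ} {B : ℝ} (hB : 0 ≤ B)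
    (hW : ∀ k j, |W k j| ≤ B) : ‖W‖ ≤ B :=
  (pi_norm_le_iff_of_nonneg hB).2 fun k => (pi_norm_le_iff_of_nonneg hB).2 (hW k)

end matVec

lemma sum_abs_sub_le_add {ι : Type*} [Fintype ι] (x y z : ι → ℝ) :
    ∑ k, |x k - y k| ≤ ∑ k, |x k - z k| + ∑ k, |y k - z k| := by
  rw [← Finset.sum_add_distrib]
  exact Finset.sum_le_sum fun k _ => (abs_sub_le _ _ _).trans_eq (by rw [abs_sub_comm (z k)])

section Lipschitz

variable {E F I ι : Type*} [SeminormedAddCommGroup E] [SeminormedAddCommGroup F] [Fintype ι]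
  {v : F → I → (ι → ℝ) → ℝ} {Lv Lf : ℝ}

lemma sub_le_of_jointLipschitz_left
    (hv : ∀ s s' i m m', |v s i m - v s' i m'| ≤ Lv * (‖s - s'‖ + ∑ k, |m k - m' k|))
    (s s' : F) (i : I) (m : ι → ℝ) : v s i m - v s' i m ≤ Lv * ‖s - s'‖ := by
  simpa using (le_abs_self _).trans (hv s s' i m m)

lemma sub_le_of_jointLipschitz_right
    (hv : ∀ s s' i m m', |v s i m - v s' i m'| ≤ Lv * (‖s - s'‖ + ∑ k, |m k - m' k|))
    (s : F) (i : I) (m m' : ι → ℝ) : v s i m - v s i m' ≤ Lv * ∑ k, |m k - m' k| := by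
  simpa using (le_abs_self _).trans (hv s s i m m')

lemma sub_le_of_jointLipschitz_comp (hLv : 0 ≤ Lv)
    (hv : ∀ s s' i m m', |v s i m - v s' i m'| ≤ Lv * (‖s - s'‖ + ∑ k, |m k - m' k|))
    {g : E → F} (hg : ∀ x y, ‖g x - g y‖ ≤ Lf * ‖x - y‖) (x y : E) (i : I) (m : ι → ℝ) :
    v (g x) i m - v (g y) i m ≤ Lv * Lf * ‖x - y‖ := by
  rw [mul_assoc]
  exact (sub_le_of_jointLipschitz_left hv _ _ i m).trans
    (mul_le_mul_of_nonneg_left (hg x y) hLv)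

end Lipschitz

lemma nonneg_of_hasDerivAt_of_sign_change {φ φ' : ℝ → ℝ} (hcont : ContinuousOn φ (Ici 0))
    (hderiv : ∀ t, 0 < t → HasDerivAt φ (φ' t) t) (hφ1 : φ 1 = 0)
    (hsign : ∀ t, 0 < t → 0 ≤ (t - 1) * φ' t) {t : ℝ} (ht : 0 ≤ t) : 0 ≤ φ t := by
  rcases le_or_gt 1 t with h1t | ht1
  · have hmono : MonotoneOn φ (Ici 1) := by
      refine monotoneOn_of_hasDerivWithinAt_nonneg (f' := φ') (convex_Ici 1)
        (hcont.mono (Ici_subset_Ici.2 zero_le_one)) (fun x hx => ?_) (fun x hx => ?_)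
      all_goals rw [interior_Ici] at hx
      · exact (hderiv x (by linarith [mem_Ioi.1 hx])).hasDerivWithinAt
      · exact nonneg_of_mul_nonneg_right (hsign x (by linarith [mem_Ioi.1 hx]))
          (by linarith [mem_Ioi.1 hx])
    simpa [hφ1] using hmono (mem_Ici.2 le_rfl) (mem_Ici.2 h1t) h1t
  · have hanti : AntitoneOn φ (Icc t 1) := by
      refine antitoneOn_of_hasDerivWithinAt_nonpos (f' := φ') (convex_Icc t 1)
        (hcont.mono fun x hx => le_trans ht hx.1) (fun x hx => ?_) (fun x hx => ?_)
      all_goals rw [interior_Icc] at hx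
      · exact (hderiv x (by linarith [hx.1])).hasDerivWithinAt
      · exact nonpos_of_mul_nonneg_right (hsign x (by linarith [hx.1])) (by linarith [hx.2])
    simpa [hφ1] using hanti (left_mem_Icc.2 ht1.le) (right_mem_Icc.2 ht1.le) ht1.le

lemma three_mul_sq_sub_one_le_klFun {t : ℝ} (ht : 0 ≤ t) :
    3 * (t - 1) ^ 2 ≤ 2 * (t + 2) * klFun t := by
  set g : ℝ → ℝ := fun t => 2 * klFun t + 2 * (t + 2) * log t - 6 * (t - 1)
  have hgap_deriv : ∀ t, 0 < t →
      HasDerivAt (fun t => 2 * (t + 2) * klFun t - 3 * (t - 1) ^ 2) (g t) t := fun t ht =>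
    ((((hasDerivAt_id' t).add_const 2).const_mul 2).mul (hasDerivAt_klFun ht.ne')).sub
      ((((hasDerivAt_id' t).sub_const 1).pow 2).const_mul 3) |>.congr_deriv (by simp only [g]; ring)
  have hg_deriv : ∀ t, 0 < t → HasDerivAt g (4 * (log t + t⁻¹ - 1)) t := fun t ht =>
    (((hasDerivAt_klFun ht.ne').const_mul 2).add
      ((((hasDerivAt_id' t).add_const 2).const_mul 2).mul (hasDerivAt_log ht.ne'))).sub
      (((hasDerivAt_id' t).sub_const 1).const_mul 6) |>.congr_deriv (by field_simp; ring)
  have hg_mono : MonotoneOn g (Ioi 0) := by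
    refine monotoneOn_of_hasDerivWithinAt_nonneg (f' := fun t => 4 * (log t + t⁻¹ - 1))
      (convex_Ioi 0) (fun x hx => (hg_deriv x hx).continuousAt.continuousWithinAt)
      (fun x hx => ?_) (fun x hx => ?_)
    all_goals rw [interior_Ioi] at hx
    · exact (hg_deriv x hx).hasDerivWithinAt
    · linarith [one_sub_inv_le_log_of_pos (mem_Ioi.1 hx)]
  have hg1 : g 1 = 0 := by simp [g, klFun_one]
  have hg_sign : ∀ t, 0 < t → 0 ≤ (t - 1) * g t := fun t ht => by
    rcases le_or_gt 1 t with h | h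
    · exact mul_nonneg (by linarith)
        (by simpa [hg1] using hg_mono (mem_Ioi.2 one_pos) (mem_Ioi.2 ht) h)
    · exact mul_nonneg_of_nonpos_of_nonpos (by linarith)
        (by simpa [hg1] using hg_mono (mem_Ioi.2 ht) (mem_Ioi.2 one_pos) h.le)
  linarith [nonneg_of_hasDerivAt_of_sign_change (by unfold klFun; fun_prop) hgap_deriv
    (by simp [klFun_one]) hg_sign ht]

lemma mul_klFun_div {p u : ℝ} (hu : u ≠ 0) : u * klFun (p / u) = p * log (p / u) + u - p := by
  rw [klFun]
  field_simp

lemma sq_sum_abs_sub_le_two_mul_sum_mul_log_div {ι : Type*} [Fintype ι] {p u : ι → ℝ}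
    (hp0 : ∀ k, 0 ≤ p k) (hp1 : ∑ k, p k = 1) (hu0 : ∀ k, 0 < u k) (hu1 : ∑ k, u k = 1) :
    (∑ k, |u k - p k|) ^ 2 ≤ 2 * ∑ k, p k * log (p k / u k) := by
  -- Cauchy–Schwarz with the weights `(p + 2u) / 3`, which sum to `1`.
  have hterm : ∀ k,
      |u k - p k| ^ 2 ≤ (p k + 2 * u k) / 3 * (2 * (u k * klFun (p k / u k))) := by
    intro k
    have key := three_mul_sq_sub_one_le_klFun (div_nonneg (hp0 k) (hu0 k).le)
    have hp : p k = p k / u k * u k := (div_mul_cancel₀ _ (hu0 k).ne').symm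
    rw [sq_abs]
    generalize p k / u k = t at key hp
    rw [hp]
    nlinarith [mul_le_mul_of_nonneg_left key (sq_nonneg (u k))]
  calc (∑ k, |u k - p k|) ^ 2
      ≤ (∑ k, (p k + 2 * u k) / 3) * ∑ k, 2 * (u k * klFun (p k / u k)) :=
        Finset.sum_sq_le_sum_mul_sum_of_sq_le_mul _
          (fun k _ => by linarith [hp0 k, hu0 k])
          (fun k _ => by
            have := klFun_nonneg (div_nonneg (hp0 k) (hu0 k).le)
            nlinarith [hu0 k])
          (fun k _ => hterm k)
    _ = 2 * ∑ k, p k * log (p k / u k) := by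
        simp only [mul_klFun_div (hu0 _).ne', ← Finset.sum_div, ← Finset.mul_sum,
          Finset.sum_add_distrib, Finset.sum_sub_distrib, hp1, hu1]
        ring

lemma integral_le_sqrt_integral_of_sq_le {Ω : Type*} [MeasurableSpace Ω] {μ : Measure Ω}
    [IsProbabilityMeasure μ] {X Y : Ω → ℝ} (hX : Integrable X μ) (hY : Integrable Y μ)
    (hXY : ∀ ω, X ω ^ 2 ≤ Y ω) : ∫ ω, X ω ∂μ ≤ √(∫ ω, Y ω ∂μ) := by
  -- AM-GM: `X ≤ Y / (2c) + c / 2` for every `c > 0`; then optimise over `c`.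
  have hc : ∀ c : ℝ, 0 < c → ∫ ω, X ω ∂μ ≤ (∫ ω, Y ω ∂μ) / (2 * c) + c / 2 := by
    intro c hc
    have hpt : ∀ ω, X ω ≤ Y ω / (2 * c) + c / 2 := fun ω => by
      rw [div_add_div _ _ (by positivity) two_ne_zero, le_div_iff₀ (by positivity)]
      nlinarith [hXY ω, sq_nonneg (X ω - c)]
    calc ∫ ω, X ω ∂μ ≤ ∫ ω, (Y ω / (2 * c) + c / 2) ∂μ :=
          integral_mono hX ((hY.div_const _).add (integrable_const _)) hpt
      _ = _ := by rw [integral_add (hY.div_const _) (integrable_const _), integral_div,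
          integral_const, probReal_univ, one_smul]
  have hY0 : 0 ≤ ∫ ω, Y ω ∂μ := integral_nonneg fun ω => (sq_nonneg _).trans (hXY ω)
  rcases hY0.eq_or_lt with hY0 | hY0
  · rw [← hY0, sqrt_zero]
    refine le_of_forall_pos_le_add fun ε hε => ?_
    simpa [← hY0] using hc (2 * ε) (by positivity)
  · have hs : 0 < √(∫ ω, Y ω ∂μ) := sqrt_pos.2 hY0
    have hopt : (∫ ω, Y ω ∂μ) / (2 * √(∫ ω, Y ω ∂μ)) = √(∫ ω, Y ω ∂μ) / 2 := by
      rw [div_eq_div_iff (by positivity) two_ne_zero]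
      nlinarith [mul_self_sqrt hY0.le]
    linarith [hc _ hs]

lemma value_sub_le_of_mask_substitution {P d : ℕ} {E I : Type*} [SeminormedAddCommGroup E]
    {p u msk : Fin P → ℝ} {V Vstar : Fin P → Fin d → ℝ} {f fstar : (Fin d → ℝ) → E}
    {v : E → I → (Fin P → ℝ) → ℝ} {Lv Lf Bv : ℝ} (hLv : 0 ≤ Lv) (hLf : 0 ≤ Lf)
    (hu0 : ∀ k, 0 ≤ u k) (hu1 : ∑ k, u k = 1) (hV : ‖V‖ ≤ Bv) (hVstar : ‖Vstar‖ ≤ Bv)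
    (hf : ∀ x y, ‖f x - f y‖ ≤ Lf * ‖x - y‖)
    (hfstar : ∀ x y, ‖fstar x - fstar y‖ ≤ Lf * ‖x - y‖)
    (hv : ∀ s s' i m m', |v s i m - v s' i m'| ≤ Lv * (‖s - s'‖ + ∑ k, |m k - m' k|))
    (i : I) :
    v (fstar (matVec p Vstar)) i p - v (f (matVec msk V)) i msk
      ≤ (v (fstar (matVec u V)) i p - v (f (matVec u V)) i p) + Lv * Lf * ‖V - Vstar‖
        + 2 * (Lv * Lf * Bv) * ∑ k, |u k - p k|
        + (Lv * Lf * Bv + Lv) * ∑ k, |msk k - p k| := by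
  have hLvLf : 0 ≤ Lv * Lf := mul_nonneg hLv hLf
  have h_attention : v (fstar (matVec p Vstar)) i p - v (fstar (matVec u Vstar)) i p
      ≤ Lv * Lf * (Bv * ∑ k, |u k - p k|) := by
    refine (sub_le_of_jointLipschitz_comp hLv hv hfstar _ _ i p).trans
      (mul_le_mul_of_nonneg_left ?_ hLvLf)
    rw [← norm_neg, neg_sub]
    exact norm_matVec_sub_left_le u p hVstar
  have h_values : v (fstar (matVec u Vstar)) i p - v (fstar (matVec u V)) i p
      ≤ Lv * Lf * ‖V - Vstar‖ := by
    refine (sub_le_of_jointLipschitz_comp hLv hv hfstar _ _ i p).trans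
      (mul_le_mul_of_nonneg_left ?_ hLvLf)
    rw [norm_sub_rev V]
    exact norm_matVec_sub_right_le hu0 hu1 Vstar V
  have h_mask : v (f (matVec u V)) i p - v (f (matVec u V)) i msk
      ≤ Lv * ∑ k, |msk k - p k| := by
    simpa only [abs_sub_comm (p _)] using
      sub_le_of_jointLipschitz_right hv (f (matVec u V)) i p msk
  have h_readout : v (f (matVec u V)) i msk - v (f (matVec msk V)) i msk
      ≤ Lv * Lf * (Bv * (∑ k, |u k - p k| + ∑ k, |msk k - p k|)) := by
    refine (sub_le_of_jointLipschitz_comp hLv hv hf _ _ i msk).trans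
      (mul_le_mul_of_nonneg_left ?_ hLvLf)
    exact (norm_matVec_sub_left_le u msk hV).trans
      (mul_le_mul_of_nonneg_left (sum_abs_sub_le_add u msk p) ((norm_nonneg _).trans hV))
  linarith

theorem test_time_error_bound_general
    {P d m : ℕ} {Q I : Type*} [MeasurableSpace Q]
    (μ : Measure Q) [IsProbabilityMeasure μ]
    (iq : Q → I)
    (p u msk : Q → Fin P → ℝ)
    (V Vstar : Fin P → Fin d → ℝ)
    (f fstar : (Fin d → ℝ) → (Fin m → ℝ))
    (v : (Fin m → ℝ) → I → (Fin P → ℝ) → ℝ)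
    (Lv Lf Bv εV εsam εcon εf : ℝ)
    (hLv : 0 ≤ Lv) (hLf : 0 ≤ Lf) (hBv : 0 ≤ Bv)
    -- probability vectors: ground-truth mask p, softmax attention u (positive), SAM mask msk
    (hp0 : ∀ q k, 0 ≤ p q k) (hp1 : ∀ q, ∑ k, p q k = 1)
    (hu0 : ∀ q k, 0 < u q k) (hu1 : ∀ q, ∑ k, u q k = 1)
    -- bounded value matrices
    (hV : ∀ k j, |V k j| ≤ Bv) (hVstar : ∀ k j, |Vstar k j| ≤ Bv)
    -- Lipschitz maps f, f* (sup norms)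
    (hf : ∀ x y, ‖f x - f y‖ ≤ Lf * ‖x - y‖)
    (hfstar : ∀ x y, ‖fstar x - fstar y‖ ≤ Lf * ‖x - y‖)
    -- value metric v is Lv-Lipschitz jointly in s (sup norm) and mask (ℓ1 norm)
    (hv : ∀ s s' i mm mm',
      |v s i mm - v s' i mm'| ≤ Lv * (‖s - s'‖ + ∑ k, |mm k - mm' k|))
    -- error quantities
    (hεsam : εsam = ∫ q, (∑ k, |msk q k - p q k|) ∂μ)
    (hεV : εV = ‖V - Vstar‖)
    (hεcon : εcon = ∫ q, (∑ k, p q k * Real.log (p q k / u q k)) ∂μ)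
    (hεf : εf = (∫ q, v (fstar (matVec (u q) V)) (iq q) (p q) ∂μ)
              - (∫ q, v (f (matVec (u q) V)) (iq q) (p q) ∂μ))
    -- integrability assumptions
    (hint1 : Integrable (fun q => v (fstar (matVec (p q) Vstar)) (iq q) (p q)) μ)
    (hint3 : Integrable (fun q => v (fstar (matVec (u q) V)) (iq q) (p q)) μ)
    (hint4 : Integrable (fun q => v (f (matVec (u q) V)) (iq q) (p q)) μ)
    (hint6 : Integrable (fun q => v (f (matVec (msk q) V)) (iq q) (msk q)) μ)
    (hint7 : Integrable (fun q => ∑ k, |msk q k - p q k|) μ)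
    (hint8 : Integrable (fun q => ∑ k, |u q k - p q k|) μ)
    (hint9 : Integrable (fun q => ∑ k, p q k * Real.log (p q k / u q k)) μ) :
    ∫ q, (v (fstar (matVec (p q) Vstar)) (iq q) (p q)
          - v (f (matVec (msk q) V)) (iq q) (msk q)) ∂μ
      ≤ Lv * Lf * (εV + Bv * (εsam + 2 * Real.sqrt (2 * εcon)))
        + Lv * εsam + εf := by
  have hpinsker : ∫ q, (∑ k, |u q k - p q k|) ∂μ ≤ √(2 * εcon) := by
    rw [hεcon, ← integral_const_mul]
    exact integral_le_sqrt_integral_of_sq_le hint8 (hint9.const_mul 2) fun q =>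
      sq_sum_abs_sub_le_two_mul_sum_mul_log_div (hp0 q) (hp1 q) (hu0 q) (hu1 q)
  have hpointwise := fun q =>
    value_sub_le_of_mask_substitution (p := p q) (msk := msk q) (i := iq q) hLv hLf
      (fun k => (hu0 q k).le) (hu1 q) (norm_le_of_forall_abs_le hBv hV)
      (norm_le_of_forall_abs_le hBv hVstar) hf hfstar hv
  have hLLB : 0 ≤ Lv * Lf * Bv := by positivity
  have hdiff := hint3.sub hint4
  have hdiffC := hdiff.add (integrable_const (μ := μ) (Lv * Lf * ‖V - Vstar‖))
  have hdiffCX := hdiffC.add (hint8.const_mul (2 * (Lv * Lf * Bv)))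
  calc _ ≤ ∫ q, (v (fstar (matVec (u q) V)) (iq q) (p q) - v (f (matVec (u q) V)) (iq q) (p q)
          + Lv * Lf * ‖V - Vstar‖ + 2 * (Lv * Lf * Bv) * ∑ k, |u q k - p q k|
          + (Lv * Lf * Bv + Lv) * ∑ k, |msk q k - p q k|) ∂μ :=
        integral_mono (hint1.sub hint6) (hdiffCX.add (hint7.const_mul _)) hpointwise
    _ = εf + Lv * Lf * εV + 2 * (Lv * Lf * Bv) * ∫ q, (∑ k, |u q k - p q k|) ∂μ
          + (Lv * Lf * Bv + Lv) * εsam := by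
        rw [integral_add, integral_add, integral_add, integral_sub hint3 hint4, integral_const,
          integral_const_mul, integral_const_mul, probReal_univ, one_smul, hεf, hεsam, hεV]
        exacts [hdiff, integrable_const _, hdiffC, hint8.const_mul _, hdiffCX, hint7.const_mul _]
    _ ≤ _ := by linarith [mul_le_mul_of_nonneg_left hpinsker hLLB]

/-- Theorem 3.1 (test-time error bound for mask substitution):
`err_test ≤ Lv·Lf·(εV + Bv·(εsam + 2√(2εcon))) + Lv·εsam + εf`. -/
theorem test_time_error_bound
    {P d m : ℕ} {Q I : Type*} [MeasurableSpace Q]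
    (μ : Measure Q) [IsProbabilityMeasure μ]
    (iq : Q → I)
    (p u msk : Q → Fin P → ℝ)
    (V Vstar : Fin P → Fin d → ℝ)
    (f fstar : (Fin d → ℝ) → (Fin m → ℝ))
    (v : (Fin m → ℝ) → I → (Fin P → ℝ) → ℝ)
    (Lv Lf Bv εV εsam εcon εf : ℝ)
    (hLv : 0 ≤ Lv) (hLf : 0 ≤ Lf) (hBv : 0 ≤ Bv)
    -- probability vectors: ground-truth mask p, softmax attention u (positive), SAM mask msk
    (hp0 : ∀ q k, 0 ≤ p q k) (hp1 : ∀ q, ∑ k, p q k = 1)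
    (hu0 : ∀ q k, 0 < u q k) (hu1 : ∀ q, ∑ k, u q k = 1)
    (hm0 : ∀ q k, 0 ≤ msk q k) (hm1 : ∀ q, ∑ k, msk q k = 1)
    -- bounded value matrices
    (hV : ∀ k j, |V k j| ≤ Bv) (hVstar : ∀ k j, |Vstar k j| ≤ Bv)
    -- Lipschitz maps f, f* (sup norms)
    (hf : ∀ x y, ‖f x - f y‖ ≤ Lf * ‖x - y‖)
    (hfstar : ∀ x y, ‖fstar x - fstar y‖ ≤ Lf * ‖x - y‖)
    -- value metric v is Lv-Lipschitz jointly in s (sup norm) and mask (ℓ1 norm)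
    (hv : ∀ s s' i mm mm',
      |v s i mm - v s' i mm'| ≤ Lv * (‖s - s'‖ + ∑ k, |mm k - mm' k|))
    -- error quantities
    (hεsam : εsam = ∫ q, (∑ k, |msk q k - p q k|) ∂μ)
    (hεV : εV = ‖V - Vstar‖)
    (hεcon : εcon = ∫ q, (∑ k, p q k * Real.log (p q k / u q k)) ∂μ)
    (hεf : εf = (∫ q, v (fstar (matVec (u q) V)) (iq q) (p q) ∂μ)
              - (∫ q, v (f (matVec (u q) V)) (iq q) (p q) ∂μ))
    -- integrability assumptions
    (hint1 : Integrable (fun q => v (fstar (matVec (p q) Vstar)) (iq q) (p q)) μ)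
    (hint2 : Integrable (fun q => v (fstar (matVec (u q) Vstar)) (iq q) (p q)) μ)
    (hint3 : Integrable (fun q => v (fstar (matVec (u q) V)) (iq q) (p q)) μ)
    (hint4 : Integrable (fun q => v (f (matVec (u q) V)) (iq q) (p q)) μ)
    (hint5 : Integrable (fun q => v (f (matVec (u q) V)) (iq q) (msk q)) μ)
    (hint6 : Integrable (fun q => v (f (matVec (msk q) V)) (iq q) (msk q)) μ)
    (hint7 : Integrable (fun q => ∑ k, |msk q k - p q k|) μ)
    (hint8 : Integrable (fun q => ∑ k, |u q k - p q k|) μ)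
    (hint9 : Integrable (fun q => ∑ k, p q k * Real.log (p q k / u q k)) μ) :
    ∫ q, (v (fstar (matVec (p q) Vstar)) (iq q) (p q)
          - v (f (matVec (msk q) V)) (iq q) (msk q)) ∂μ
      ≤ Lv * Lf * (εV + Bv * (εsam + 2 * Real.sqrt (2 * εcon)))
        + Lv * εsam + εf :=
  test_time_error_bound_general μ iq p u msk V Vstar f fstar v Lv Lf Bv εV εsam εcon εf hLv hLf hBv
    hp0 hp1 hu0 hu1 hV hVstar hf hfstar hv hεsam hεV hεcon hεf hint1 hint3 hint4 hint6 hint7 hint8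
    hint9
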